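/- For every α ∈ [0,1), a ∈ ℂ, γ ∈ ℝ and E > 0, the denominator D_{α,a,γ}(E) is nonzero and the transmission and reflection coefficients satisfy T_{α,a,γ}(E) + R_{α,a,γ}(E) = 1. -/

import Mathlib

open Filter Set

noncomputable section

/-- The denominator `D_{α,a,γ}(E) = E^{(1+α)/2} Γ((1-α)/2)(1+|a|²)
+ i γ 2^{1+α} e^{iπα/2} Γ((3+α)/2)`. -/
def Dden (α : ℝ) (a : ℂ) (γ E : ℝ) : ℂ :=
  ((E ^ ((1 + α) / 2) : ℝ) : ℂ) * ((Real.Gamma ((1 - α) / 2) : ℝ) : ℂ)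
      * ((1 + ‖a‖ ^ 2 : ℝ) : ℂ)
    + Complex.I * (γ : ℂ) * (((2 : ℝ) ^ (1 + α) : ℝ) : ℂ)
      * Complex.exp (Complex.I * (Real.pi : ℂ) * (α : ℂ) / 2)
      * ((Real.Gamma ((3 + α) / 2) : ℝ) : ℂ)

/-- The transmission coefficient
`T_{α,a,γ}(E) = | E^{(1+α)/2}(1+e^{iπα}) Γ((1-α)/2) conj(a) / D_{α,a,γ}(E) |²`. -/
def Tcoef (α : ℝ) (a : ℂ) (γ E : ℝ) : ℝ :=
  ‖((E ^ ((1 + α) / 2) : ℝ) : ℂ)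
      * (1 + Complex.exp (Complex.I * (Real.pi : ℂ) * (α : ℂ)))
      * ((Real.Gamma ((1 - α) / 2) : ℝ) : ℂ) * (starRingEnd ℂ a) / Dden α a γ E‖ ^ 2

/-- The reflection coefficient
`R_{α,a,γ}(E) = | (E^{(1+α)/2} Γ((1-α)/2)(1-|a|² e^{iπα})
+ i γ 2^{1+α} e^{iπα/2} Γ((3+α)/2)) / D_{α,a,γ}(E) |²`. -/
def Rcoef (α : ℝ) (a : ℂ) (γ E : ℝ) : ℝ :=
  ‖(((E ^ ((1 + α) / 2) : ℝ) : ℂ) * ((Real.Gamma ((1 - α) / 2) : ℝ) : ℂ)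
      * (1 - ((‖a‖ ^ 2 : ℝ) : ℂ) * Complex.exp (Complex.I * (Real.pi : ℂ) * (α : ℂ)))
    + Complex.I * (γ : ℂ) * (((2 : ℝ) ^ (1 + α) : ℝ) : ℂ)
      * Complex.exp (Complex.I * (Real.pi : ℂ) * (α : ℂ) / 2)
      * ((Real.Gamma ((3 + α) / 2) : ℝ) : ℂ)) / Dden α a γ E‖ ^ 2

namespace Scattering

open Complex ComplexConjugate

theorem ofReal_mul_one_add_add_I_mul_ne_zero {A m : ℝ} (C : ℝ) {w : ℂ} (hA : A ≠ 0)
    (hm : 0 ≤ m) (hw : 0 < w.re) : (A : ℂ) * (1 + m) + I * C * w ≠ 0 := by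
  intro h
  have him : C * w.re = 0 := by simpa using congrArg Complex.im h
  have hC : C = 0 := (mul_eq_zero.mp him).resolve_right hw.ne'
  have hre : A * (1 + m) = 0 := by simpa [hC] using congrArg Complex.re h
  exact mul_ne_zero hA (by linarith) hre

/-- Flux conservation in algebraic form: with `|w| = 1`, one has `1 + w² = 2 (Re w) w`, so the
`C`-term of the denominator is orthogonal to `1 + w²` and drops out of the cross term. -/
theorem normSq_add_normSq_eq_normSq_of_normSq_eq_one (A C : ℝ) (z : ℂ) {w : ℂ}
    (hw : normSq w = 1) :
    normSq ((A : ℂ) * (1 + w ^ 2) * conj z)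
      + normSq ((A : ℂ) * (1 - (normSq z : ℂ) * w ^ 2) + I * C * w)
      = normSq ((A : ℂ) * (1 + (normSq z : ℂ)) + I * C * w) := by
  rw [normSq_apply] at hw
  simp only [normSq_apply, add_re, add_im, mul_re, mul_im, one_re, one_im, I_re, I_im,
    ofReal_re, ofReal_im, sub_re, sub_im, conj_re, conj_im, pow_two]
  linear_combination (A ^ 2 * (z.re * z.re + z.im * z.im) * (w.re * w.re + w.im * w.im + 1)
    * (1 + z.re * z.re + z.im * z.im) - 2 * A * (z.re * z.re + z.im * z.im) * C * w.im) * hw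

def amplitude (α E : ℝ) : ℝ := E ^ ((1 + α) / 2) * Real.Gamma ((1 - α) / 2)

def coupling (α γ : ℝ) : ℝ := γ * 2 ^ (1 + α) * Real.Gamma ((3 + α) / 2)

def phase (α : ℝ) : ℂ := exp (I * Real.pi * α / 2)

theorem amplitude_pos {α E : ℝ} (hα : α < 1) (hE : 0 < E) : 0 < amplitude α E :=
  mul_pos (Real.rpow_pos_of_pos hE _) (Real.Gamma_pos_of_pos (by linarith))

theorem normSq_phase (α : ℝ) : normSq (phase α) = 1 := by
  rw [phase, ← Complex.sq_norm, norm_exp]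
  simp

theorem phase_re_pos {α : ℝ} (h₀ : -1 < α) (h₁ : α < 1) : 0 < (phase α).re := by
  have harg : I * Real.pi * α / 2 = ((Real.pi * α / 2 : ℝ) : ℂ) * I := by push_cast; ring
  rw [phase, harg, exp_ofReal_mul_I_re]
  apply Real.cos_pos_of_mem_Ioo
  constructor <;> nlinarith [Real.pi_pos]

theorem phase_sq (α : ℝ) : phase α ^ 2 = exp (I * Real.pi * α) := by
  rw [phase, sq, ← exp_add]
  ring_nf

theorem Dden_eq (α : ℝ) (a : ℂ) (γ E : ℝ) :
    Dden α a γ E = amplitude α E * (1 + (normSq a : ℂ)) + I * coupling α γ * phase α := by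
  rw [Dden, amplitude, coupling, phase, Complex.sq_norm a]
  push_cast
  ring

theorem Tcoef_eq (α : ℝ) (a : ℂ) (γ E : ℝ) :
    Tcoef α a γ E
      = normSq (amplitude α E * (1 + phase α ^ 2) * conj a) / normSq (Dden α a γ E) := by
  rw [Tcoef, Complex.sq_norm, normSq_div, phase_sq, amplitude]
  congr 2
  push_cast
  ring

theorem Rcoef_eq (α : ℝ) (a : ℂ) (γ E : ℝ) :
    Rcoef α a γ E
      = normSq (amplitude α E * (1 - (normSq a : ℂ) * phase α ^ 2) + I * coupling α γ * phase α)
        / normSq (Dden α a γ E) := by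
  rw [Rcoef, Complex.sq_norm, normSq_div, phase_sq, Complex.sq_norm a, amplitude, coupling, phase]
  congr 2
  push_cast
  ring

end Scattering

open Scattering

/-- For every `α ∈ [0,1)`, `a ∈ ℂ`, `γ ∈ ℝ`, `E > 0`, the denominator is nonzero and
`T_{α,a,γ}(E) + R_{α,a,γ}(E) = 1`. -/
theorem transmission_plus_reflection_eq_one (α : ℝ) (hα : α ∈ Set.Ico (0 : ℝ) 1)
    (a : ℂ) (γ E : ℝ) (hE : 0 < E) :
    Dden α a γ E ≠ 0 ∧ Tcoef α a γ E + Rcoef α a γ E = 1 := by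
  obtain ⟨hα₀, hα₁⟩ := hα
  have hD : Dden α a γ E ≠ 0 := by
    rw [Dden_eq]
    exact ofReal_mul_one_add_add_I_mul_ne_zero _ (amplitude_pos hα₁ hE).ne'
      (Complex.normSq_nonneg a) (phase_re_pos (by linarith) hα₁)
  refine ⟨hD, ?_⟩
  rw [Tcoef_eq, Rcoef_eq, ← add_div,
    normSq_add_normSq_eq_normSq_of_normSq_eq_one _ _ _ (normSq_phase α), ← Dden_eq,
    div_self (Complex.normSq_pos.mpr hD).ne']
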